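/- arXiv:1711.02722 — 4 statements merged into one kernel-verified Lean document; each statement's English description precedes it below -/
import Mathlib

section
/- For the homomorphism $\psi: \mathbb{Z} \to \mathbb{Z}^2 \rtimes \Sigma_2$ corresponding to the 2-valued square root map on the circle, defined by $\psi(k) = (k/2, k/2; \mathrm{id})$ for $k$ even and $\psi(k) = ((k-1)/2, (k+1)/2; (1\,2))$ for $k$ odd, the generalized Reidemeister relation on $\mathbb{Z} \times \{1,2\}$ has exactly one equivalence class. -/
/-!
Every class contains `(0, 0)`: an even twist `k = 2α` fixes the index and shifts `0` by
`k + φ(-k) = α`, while an odd twist `k = 2α + 1` swaps the index and shifts `0` by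
`k + φ₁(-k) = α` as well.
-/

/-- The component data of the homomorphism ψ : ℤ → ℤ² ⋊ Σ₂ for the 2-valued
square root map of the circle: φ₁(k) = k/2 (k even), (k-1)/2 (k odd);
φ₂(k) = k/2 (k even), (k+1)/2 (k odd); σ_k = id (k even), (1 2) (k odd). -/
def sqrtPhi (j : Fin 2) (k : ℤ) : ℤ :=
  if Even k then k / 2
  else if j = 0 then (k - 1) / 2 else (k + 1) / 2

def sqrtSigma (k : ℤ) : Equiv.Perm (Fin 2) :=
  if Even k then 1 else Equiv.swap 0 1

theorem Quot.natCard_eq_one_of_forall_rel {α : Type*} {r : α → α → Prop} (a : α)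
    (h : ∀ b, r b a) : Nat.card (Quot r) = 1 :=
  Nat.card_eq_one_iff_exists.2
    ⟨Quot.mk r a, Quot.ind fun b => Quot.sound (h b)⟩

lemma sqrtSigma_two_mul (m : ℤ) : sqrtSigma (2 * m) = 1 := by
  simp [sqrtSigma]

lemma sqrtSigma_two_mul_add_one (m : ℤ) : sqrtSigma (2 * m + 1) = Equiv.swap 0 1 := by
  simp [sqrtSigma]

lemma sqrtPhi_two_mul (j : Fin 2) (m : ℤ) : sqrtPhi j (2 * m) = m := by
  simp [sqrtPhi]

lemma sqrtPhi_zero_two_mul_add_one (m : ℤ) : sqrtPhi 0 (2 * m + 1) = m := by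
  simp [sqrtPhi]

lemma exists_sqrt_reidemeister_twist (p : ℤ × Fin 2) :
    ∃ k : ℤ, sqrtSigma k 0 = p.2 ∧ p.1 = k + 0 + sqrtPhi 0 (-k) := by
  obtain ⟨α, i⟩ := p
  fin_cases i
  · refine ⟨2 * α, by simp [sqrtSigma_two_mul], ?_⟩
    rw [show -(2 * α) = 2 * -α by ring, sqrtPhi_two_mul]
    ring
  · refine ⟨2 * α + 1, by simp [sqrtSigma_two_mul_add_one], ?_⟩
    rw [show -(2 * α + 1) = 2 * (-α - 1) + 1 by ring, sqrtPhi_zero_two_mul_add_one]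
    ring

/-- The generalized Reidemeister relation on ℤ × {1,2} for the square root map,
(α,i) ∼ (β,j) iff ∃ k, σ_k(j) = i and α = k + β + φⱼ(-k), has exactly one
equivalence class. -/
theorem stmt_9 (R : ℤ × Fin 2 → ℤ × Fin 2 → Prop)
    (hR : ∀ p q, R p q ↔ ∃ k : ℤ, sqrtSigma k q.2 = p.2 ∧
      p.1 = k + q.1 + sqrtPhi q.2 (-k)) :
    Nat.card (Quot R) = 1 :=
  Quot.natCard_eq_one_of_forall_rel (0, 0) fun p =>
    (hR p (0, 0)).2 (exists_sqrt_reidemeister_twist p)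
end

section
/- Let $n \geq 1$ and $d \neq n$ be integers, and consider the assignment to each $k \in \mathbb{Z}$ of integers $q_k, r_k$ with $dk = q_k n + r_k$, $0 \le r_k < n$. Define a relation on $\mathbb{Z} \times \{1,\dots,n\}$ by: $(\alpha,i) \sim (\beta,j)$ iff there exists $k \in \mathbb{Z}$ such that $i \equiv j + r_k \pmod n$ with $i \in \{1,\dots,n\}$ matching the appropriate lift, and $\alpha - \beta = \phi_j(k) - k$ where $\phi_j(k) = q_k$ when $j + r_k \le n$ and $\phi_j(k) = q_k + 1$ otherwise. Then $(\alpha,i) \sim (\beta,j)$ if and only if $d\alpha + i \equiv d\beta + j \pmod{|d-n|}$, and hence the number of equivalence classes is $|d - n|$. -/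
/-!
With q_k = dk / n and r_k = dk % n, the two cases of φ_j(k) are exactly the quotient of
dk + j by n (the second case is a carry), and i is its remainder. So (α, i) ∼ (β, j) says that
dk + j = n (α - β + k) + i for some k, i.e. that d - n divides d (α - β) + (i - j). The classes
are then the fibres of (α, i) ↦ dα + i + 1 in ℤ/(d - n), which is onto because
(α, i) ↦ nα + i + 1 already hits every integer.
-/

open Function

namespace Int

theorem ite_ediv_eq_add_ediv {n j : ℤ} (hj : 0 ≤ j) (hjn : j < n) (x : ℤ) :
    (if j + x % n < n then x / n else x / n + 1) = (x + j) / n := by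
  have hn : 0 < n := hj.trans_lt hjn
  have hx : x + j = (x % n + j) + n * (x / n) := by linear_combination -mul_ediv_add_emod x n
  have hr0 : 0 ≤ x % n := emod_nonneg x hn.ne'
  have hrn : x % n < n := emod_lt_of_pos x hn
  rw [hx, add_mul_ediv_left _ _ hn.ne']
  split_ifs with h
  · rw [ediv_eq_zero_of_lt (a := x % n + j) (by omega) (by omega), zero_add]
  · rw [show (x % n + j) / n = 1 by rw [ediv_eq_iff_of_pos hn]; omega, add_comm]

theorem exists_mul_eq_mul_add_add_iff_dvd (d n a c : ℤ) :
    (∃ k, d * k = n * (a + k) + c) ↔ d - n ∣ d * a + c := by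
  constructor
  · rintro ⟨k, hk⟩
    exact ⟨a + k, by linear_combination -hk⟩
  · rintro ⟨m, hm⟩
    exact ⟨m - a, by linear_combination -hm⟩

end Int

/-- The paper's index j ∈ {1, …, n} is encoded as `j - 1 : Fin n`. -/
def reidemeisterRel (n : ℕ) (d : ℤ) (p q : ℤ × Fin n) : Prop :=
  ∃ k : ℤ, ((q.2 : ℤ) + d * k % n) % n = (p.2 : ℤ) ∧
    p.1 - q.1 = (if (q.2 : ℤ) + d * k % n < n then d * k / n else d * k / n + 1) - k

theorem reidemeisterRel_iff_modEq {n : ℕ} {d : ℤ} (p q : ℤ × Fin n) :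
    reidemeisterRel n d p q ↔
      d * p.1 + ((p.2 : ℤ) + 1) ≡ d * q.1 + ((q.2 : ℤ) + 1) [ZMOD d - n] := by
  have hi : (0 : ℤ) ≤ p.2 := by positivity
  have hin : (p.2 : ℤ) < n := by exact_mod_cast p.2.isLt
  have hj : (0 : ℤ) ≤ q.2 := by positivity
  have hjn : (q.2 : ℤ) < n := by exact_mod_cast q.2.isLt
  have carry_iff (k : ℤ) : ((q.2 : ℤ) + d * k % n) % n = (p.2 : ℤ) ∧
      p.1 - q.1 = (if (q.2 : ℤ) + d * k % n < n then d * k / n else d * k / n + 1) - k ↔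
      d * k = n * (p.1 - q.1 + k) + ((p.2 : ℤ) - q.2) := by
    rw [Int.ite_ediv_eq_add_ediv hj hjn, add_comm (q.2 : ℤ), Int.emod_add_emod, and_comm,
      eq_sub_iff_add_eq, eq_comm, Int.ediv_emod_unique (hj.trans_lt hjn)]
    constructor
    · rintro ⟨h, -⟩
      linear_combination -h
    · intro h
      exact ⟨by linear_combination -h, hi, hin⟩
  rw [Int.modEq_comm, Int.modEq_iff_dvd, reidemeisterRel]
  simp_rw [carry_iff]
  rw [Int.exists_mul_eq_mul_add_add_iff_dvd]
  ring_nf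

theorem Nat.card_quot_eq_of_surjective {α β : Type*} {R : α → α → Prop} {f : α → β}
    (hf : Surjective f) (hR : ∀ a b, R a b ↔ f a = f b) : Nat.card (Quot R) = Nat.card β := by
  obtain rfl : R = (Setoid.ker f).r := funext₂ fun a b => propext (hR a b)
  exact Nat.card_congr (Setoid.quotientKerEquivOfSurjective f hf)

theorem surjective_intCast_mul_add_succ {n : ℕ} (hn : 1 ≤ n) (d : ℤ) :
    Surjective fun p : ℤ × Fin n => ((d * p.1 + ((p.2 : ℤ) + 1) : ℤ) : ZMod (d - n).natAbs) := by
  have : NeZero n := ⟨by omega⟩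
  intro c
  obtain ⟨t, rfl⟩ := ZMod.intCast_surjective c
  have ht := (Int.divModEquiv n).symm_apply_apply (t - 1)
  rw [Int.divModEquiv_symm_apply] at ht
  refine ⟨Int.divModEquiv n (t - 1), ?_⟩
  rw [ZMod.intCast_eq_intCast_iff_dvd_sub, Int.natAbs_dvd]
  exact ⟨-(Int.divModEquiv n (t - 1)).1, by linear_combination -ht⟩

theorem stmt_10_general (n : ℕ) (hn : 1 ≤ n) (d : ℤ)
    (R : ℤ × Fin n → ℤ × Fin n → Prop)
    (hR : ∀ p q, R p q ↔ ∃ k : ℤ,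
      ((q.2 : ℤ) + d * k % n) % n = (p.2 : ℤ) ∧
      p.1 - q.1 = (if (q.2 : ℤ) + d * k % n < n then d * k / n
        else d * k / n + 1) - k) :
    (∀ p q : ℤ × Fin n,
      R p q ↔ Int.ModEq (d - n) (d * p.1 + ((p.2 : ℤ) + 1)) (d * q.1 + ((q.2 : ℤ) + 1))) ∧
    Nat.card (Quot R) = (d - n).natAbs := by
  have key p q := (hR p q).trans (reidemeisterRel_iff_modEq p q)
  refine ⟨key, ?_⟩
  rw [Nat.card_quot_eq_of_surjective (surjective_intCast_mul_add_succ hn d), Nat.card_zmod]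
  intro p q
  rw [key, ZMod.intCast_eq_intCast_iff, Int.natCast_natAbs, Int.modEq_abs]

/-- For the n-valued circle map of degree d ≠ n (lift-factors (dt+j-1)/n), with
dk = q_k n + r_k, 0 ≤ r_k < n: the Reidemeister relation on ℤ × {1,…,n}
(indices j ∈ {1,…,n} encoded as j-1 ∈ Fin n) is
(α,i) ∼ (β,j) iff ∃ k with i ≡ j + r_k (mod n) and α - β = φⱼ(k) - k, where
φⱼ(k) = q_k if j + r_k ≤ n and q_k + 1 otherwise.  This holds iff
dα + i ≡ dβ + j (mod |d-n|), and hence there are exactly |d-n| classes. -/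
theorem stmt_10 (n : ℕ) (hn : 1 ≤ n) (d : ℤ) (hd : d ≠ n)
    (R : ℤ × Fin n → ℤ × Fin n → Prop)
    (hR : ∀ p q, R p q ↔ ∃ k : ℤ,
      ((q.2 : ℤ) + d * k % n) % n = (p.2 : ℤ) ∧
      p.1 - q.1 = (if (q.2 : ℤ) + d * k % n < n then d * k / n
        else d * k / n + 1) - k) :
    (∀ p q : ℤ × Fin n,
      R p q ↔ Int.ModEq (d - n) (d * p.1 + ((p.2 : ℤ) + 1)) (d * q.1 + ((q.2 : ℤ) + 1))) ∧
    Nat.card (Quot R) = (d - n).natAbs :=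
  stmt_10_general n hn d R hR
end

section
/- Let $n \ge 1$ and let $f: S^1 \to D_n(S^1)$ be the $n$-valued map of degree $n$, with lift-factors $\bar f^*_j(t) = t + (j-1)/n$ on $\mathbb{R}$. Then $\alpha + \bar f^*_i$ is lift-factor equivalent to $\beta + \bar f^*_j$ if and only if $i = j$ and $\alpha = \beta$; consequently the Reidemeister number of $f$ is infinite. -/
/-- For the n-valued circle map of degree n, with lift-factors
f*_j(t) = t + (j-1)/n on ℝ (index j-1 encoded as j : Fin n), the lift-factor
α + f*_i is equivalent to β + f*_j (i.e. ∃ k ∈ ℤ with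
α + f*_i(t) = k + β + f*_j(t - k) for all t) iff i = j and α = β; hence the
set of lift-factor classes, i.e. the Reidemeister number, is infinite. -/
theorem stmt_11 (n : ℕ) (hn : 0 < n)
    (g : Fin n → ℝ → ℝ) (hg : ∀ (j : Fin n) (t : ℝ), g j t = t + (j : ℝ) / n)
    (R : ℤ × Fin n → ℤ × Fin n → Prop)
    (hR : ∀ p q, R p q ↔ ∃ k : ℤ, ∀ t : ℝ,
      (p.1 : ℝ) + g p.2 t = (k : ℝ) + ((q.1 : ℝ) + g q.2 (t - k))) :
    (∀ p q : ℤ × Fin n, R p q ↔ p = q) ∧ Infinite (Quot R) := by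
  have hn' : (0 : ℝ) < n := by exact_mod_cast hn
  have key : ∀ p q : ℤ × Fin n, R p q ↔ p = q := by
    intro p q
    rw [hR]
    constructor
    · rintro ⟨k, hk⟩
      have h := hk 0
      rw [hg, hg] at h
      -- h : p.1 + (0 + p.2/n) = k + (q.1 + ((0 - k) + q.2/n))
      have h' : (p.1 : ℝ) + (p.2 : ℝ) / n = (q.1 : ℝ) + (q.2 : ℝ) / n := by
        linarith
      have h2 : ((p.1 : ℝ) - q.1) * n = (q.2 : ℝ) - (p.2 : ℝ) := by
        field_simp at h' ⊢
        linarith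
      have h3 : (p.1 - q.1) * (n : ℤ) = ((q.2 : ℕ) : ℤ) - ((p.2 : ℕ) : ℤ) := by
        exact_mod_cast h2
      have hd : ((q.2 : ℕ) : ℤ) - ((p.2 : ℕ) : ℤ) = 0 := by
        have hql : ((q.2 : ℕ) : ℤ) < n := by exact_mod_cast q.2.isLt
        have hpl : ((p.2 : ℕ) : ℤ) < n := by exact_mod_cast p.2.isLt
        have hq0 : (0 : ℤ) ≤ ((q.2 : ℕ) : ℤ) := Int.ofNat_nonneg _
        have hp0 : (0 : ℤ) ≤ ((p.2 : ℕ) : ℤ) := Int.ofNat_nonneg _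
        rcases lt_trichotomy (p.1 - q.1) 0 with hlt | heq | hgt
        · nlinarith [h3]
        · rw [heq] at h3; simpa using h3.symm
        · nlinarith [h3]
      have h22 : p.2 = q.2 := by
        apply Fin.ext
        omega
      have h11 : p.1 = q.1 := by
        have : (p.1 - q.1) * (n : ℤ) = 0 := by rw [h3, hd]
        have hn0 : (n : ℤ) ≠ 0 := by exact_mod_cast hn.ne'
        have := mul_eq_zero.mp this
        omega
      exact Prod.ext h11 h22
    · rintro rfl
      exact ⟨0, fun t => by rw [hg, hg]; push_cast; ring⟩
  refine ⟨key, ?_⟩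
  haveI : Nonempty (Fin n) := Fin.pos_iff_nonempty.mp hn
  have hinj : Function.Injective (Quot.mk R) := by
    have hlift : ∀ x : ℤ × Fin n,
        Quot.lift id (fun p q h => (key p q).mp h) (Quot.mk R x) = x := fun _ => rfl
    intro a b hab
    have := congrArg (Quot.lift id (fun p q h => (key p q).mp h)) hab
    simpa [hlift] using this
  exact Infinite.of_injective (Quot.mk R) hinj
end

section
/- Consider the homomorphism $\psi: \mathbb{Z}^2 \to (\mathbb{Z}^2)^3 \rtimes \Sigma_3$ defined for $\gamma = (z_1,z_2)$ by: if $z_1$ is even, $\psi(\gamma) = ((z_1/2,-z_2),(z_1/2,-z_2),(-z_1,-z_2); \mathrm{id})$; if $z_1$ is odd, $\psi(\gamma) = (((z_1-1)/2,-z_2),((z_1+1)/2,-z_2),(-z_1,-z_2); (1\,2))$. Then the generalized Reidemeister relation on $\mathbb{Z}^2 \times \{1,2,3\}$ determined by $\psi$ has exactly 6 equivalence classes: 2 classes with index in $\{1,2\}$ and 4 classes with index $3$. -/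
/-- Component data of the homomorphism ψ : ℤ² → (ℤ²)³ ⋊ Σ₃ of the 3-valued
torus map example: for γ = (z₁,z₂) with z₁ even,
ψγ = ((z₁/2,-z₂),(z₁/2,-z₂),(-z₁,-z₂); id), and for z₁ odd,
ψγ = (((z₁-1)/2,-z₂),((z₁+1)/2,-z₂),(-z₁,-z₂); (1 2)). -/
def torusPhi (j : Fin 3) (γ : ℤ × ℤ) : ℤ × ℤ :=
  if Even γ.1 then (if j = 2 then (-γ.1, -γ.2) else (γ.1 / 2, -γ.2))
  else if j = 0 then ((γ.1 - 1) / 2, -γ.2)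
  else if j = 1 then ((γ.1 + 1) / 2, -γ.2)
  else (-γ.1, -γ.2)

def torusSigma (γ : ℤ × ℤ) : Equiv.Perm (Fin 3) :=
  if Even γ.1 then 1 else Equiv.swap 0 1

abbrev TorusT := Bool ⊕ Bool × Bool

def torusInv (p : (ℤ × ℤ) × Fin 3) : TorusT :=
  if p.2 = 2 then Sum.inr (decide (p.1.1 % 2 = 1), decide (p.1.2 % 2 = 1))
  else Sum.inl (decide (p.1.2 % 2 = 1))

def torusRep : TorusT → (ℤ × ℤ) × Fin 3
  | .inl b => ((0, if b then 1 else 0), 0)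
  | .inr (b1, b2) => ((if b1 then 1 else 0, if b2 then 1 else 0), 2)

lemma torusPhi_snd (j : Fin 3) (γ : ℤ × ℤ) : (torusPhi j γ).2 = -γ.2 := by
  unfold torusPhi; split_ifs <;> rfl

lemma torusPhi_two (γ : ℤ × ℤ) : torusPhi 2 γ = (-γ.1, -γ.2) := by
  unfold torusPhi; split_ifs <;> simp_all

lemma torusSigma_two (γ : ℤ × ℤ) : torusSigma γ 2 = 2 := by
  unfold torusSigma; split_ifs <;> decide

lemma torusSigma_ne_two (γ : ℤ × ℤ) {j : Fin 3} (hj : j ≠ 2) :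
    torusSigma γ j ≠ 2 := by
  intro h
  exact hj ((torusSigma γ).injective (h.trans (torusSigma_two γ).symm))


/-- The generalized Reidemeister relation on ℤ² × {1,2,3} of the 3-valued torus
map has exactly 6 classes: 2 with index in {1,2} and 4 with index 3. -/
theorem stmt_16 (R : (ℤ × ℤ) × Fin 3 → (ℤ × ℤ) × Fin 3 → Prop)
    (hR : ∀ p q, R p q ↔ ∃ γ : ℤ × ℤ,
      torusSigma γ q.2 = p.2 ∧ p.1 = γ + q.1 - torusPhi q.2 γ) :
    Nat.card (Quot R) = 6 ∧
    Nat.card {c : Quot R // ∃ (α : ℤ × ℤ) (i : Fin 3), i ≠ 2 ∧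
      c = Quot.mk R (α, i)} = 2 ∧
    Nat.card {c : Quot R // ∃ α : ℤ × ℤ, c = Quot.mk R (α, 2)} = 4 := by
  -- torusInv is constant on R-classes
  have hf : ∀ p q, R p q → torusInv p = torusInv q := by
    intro p q h
    rw [hR] at h
    obtain ⟨γ, hσ, hα⟩ := h
    have h2 : p.1.2 = 2 * γ.2 + q.1.2 := by
      have := congrArg Prod.snd hα
      simp [torusPhi_snd] at this
      omega
    by_cases hq : q.2 = 2
    · have hp2 : p.2 = 2 := by rw [← hσ, hq, torusSigma_two]
      have h1 : p.1.1 = 2 * γ.1 + q.1.1 := by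
        have := congrArg Prod.fst hα
        rw [hq, torusPhi_two] at this
        simp at this
        omega
      simp only [torusInv, hp2, hq, if_pos rfl]
      rw [decide_eq_decide.mpr (show p.1.1 % 2 = 1 ↔ q.1.1 % 2 = 1 by omega),
        decide_eq_decide.mpr (show p.1.2 % 2 = 1 ↔ q.1.2 % 2 = 1 by omega)]
    · have hp2 : p.2 ≠ 2 := by rw [← hσ]; exact torusSigma_ne_two γ hq
      simp only [torusInv, if_neg hp2, if_neg hq]
      rw [decide_eq_decide.mpr (show p.1.2 % 2 = 1 ↔ q.1.2 % 2 = 1 by omega)]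
  -- canonical forms
  have mk0 : ∀ x y : ℤ, Quot.mk R ((x, y), (0 : Fin 3)) =
      Quot.mk R ((0, y % 2), (0 : Fin 3)) := by
    intro x y
    apply Quot.sound
    rw [hR]
    refine ⟨(2 * x, (y - y % 2) / 2), ?_, ?_⟩
    · simp [torusSigma, even_two_mul x |>.mul_right 1, show Even (2*x) from ⟨x, two_mul x⟩]
    · have he : Even ((2 * x : ℤ)) := ⟨x, two_mul x⟩
      simp only [torusPhi, if_pos he, show (0 : Fin 3) ≠ 2 by decide, if_neg]
      simp [Prod.ext_iff]
      constructor <;> omega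
  have mk1 : ∀ x y : ℤ, Quot.mk R ((x, y), (1 : Fin 3)) =
      Quot.mk R ((0, y % 2), (0 : Fin 3)) := by
    intro x y
    apply Quot.sound
    rw [hR]
    refine ⟨(2 * x - 1, (y - y % 2) / 2), ?_, ?_⟩
    · have : ¬ Even ((2 * x - 1 : ℤ)) := by simp [Int.even_sub, Int.even_iff]
      simp [torusSigma, this]
    · have ho : ¬ Even ((2 * x - 1 : ℤ)) := by simp [Int.even_sub, Int.even_iff]
      simp only [torusPhi, if_neg ho, if_pos rfl]
      simp [Prod.ext_iff]
      constructor <;> omega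
  have mk2 : ∀ x y : ℤ, Quot.mk R ((x, y), (2 : Fin 3)) =
      Quot.mk R ((x % 2, y % 2), (2 : Fin 3)) := by
    intro x y
    apply Quot.sound
    rw [hR]
    refine ⟨((x - x % 2) / 2, (y - y % 2) / 2), torusSigma_two _, ?_⟩
    rw [torusPhi_two]
    simp [Prod.ext_iff]
    constructor <;> omega
  -- the equivalence
  let g : Quot R → TorusT := Quot.lift torusInv hf
  have left : ∀ c : Quot R, Quot.mk R (torusRep (g c)) = c := by
    apply Quot.ind
    rintro ⟨⟨x, y⟩, i⟩
    have hy : y % 2 = 0 ∨ y % 2 = 1 := Int.emod_two_eq y |>.imp id id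
    have hx : x % 2 = 0 ∨ x % 2 = 1 := Int.emod_two_eq x |>.imp id id
    fin_cases i
    · show Quot.mk R (torusRep (torusInv ((x, y), 0))) = Quot.mk R ((x, y), 0)
      rw [mk0 x y]
      rcases hy with h | h <;> simp [torusInv, torusRep, h]
    · show Quot.mk R (torusRep (torusInv ((x, y), 1))) = Quot.mk R ((x, y), 1)
      rw [mk1 x y]
      rcases hy with h | h <;> simp [torusInv, torusRep, h]
    · show Quot.mk R (torusRep (torusInv ((x, y), 2))) = Quot.mk R ((x, y), 2)
      rw [mk2 x y]
      rcases hx with h1 | h1 <;> rcases hy with h | h <;>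
        simp [torusInv, torusRep, h, h1]
  have right : ∀ t : TorusT, g (Quot.mk R (torusRep t)) = t := by
    rintro (b | ⟨b1, b2⟩)
    · cases b <;> rfl
    · cases b1 <;> cases b2 <;> rfl
  let e : Quot R ≃ TorusT := ⟨g, fun t => Quot.mk R (torusRep t), left, right⟩
  refine ⟨?_, ?_, ?_⟩
  · rw [Nat.card_congr e]
    simp [Nat.card_eq_fintype_card]
  · have hmem : ∀ c : Quot R, (∃ (α : ℤ × ℤ) (i : Fin 3), i ≠ 2 ∧
        c = Quot.mk R (α, i)) ↔ (e c).isLeft = true := by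
      intro c
      constructor
      · rintro ⟨α, i, hi, rfl⟩
        show (torusInv (α, i)).isLeft = true
        simp [torusInv, hi]
      · intro h
        obtain ⟨p, rfl⟩ := Quot.exists_rep c
        by_cases hp : p.2 = 2
        · exfalso
          have : (torusInv p).isLeft = true := h
          simp [torusInv, hp] at this
        · exact ⟨p.1, p.2, hp, by rw [Prod.mk.eta]⟩
    rw [Nat.card_congr (e.subtypeEquiv (q := fun t => t.isLeft = true) hmem), Nat.card_eq_fintype_card]
    decide
  · have hmem : ∀ c : Quot R, (∃ α : ℤ × ℤ, c = Quot.mk R (α, 2)) ↔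
        (e c).isRight = true := by
      intro c
      constructor
      · rintro ⟨α, rfl⟩
        show (torusInv (α, 2)).isRight = true
        simp [torusInv]
      · intro h
        obtain ⟨p, rfl⟩ := Quot.exists_rep c
        by_cases hp : p.2 = 2
        · exact ⟨p.1, by rw [← hp, Prod.mk.eta]⟩
        · exfalso
          have : (torusInv p).isRight = true := h
          simp [torusInv, hp] at this
    rw [Nat.card_congr (e.subtypeEquiv (q := fun t => t.isRight = true) hmem), Nat.card_eq_fintype_card]
    decide
end
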